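/- arXiv:math/9902044 — 5 statements merged into one kernel-verified Lean document; each statement's English description precedes it below -/
import Mathlib

section
/- For every positive integer m, the function t ↦ log Γ(1/t) + (1/t)(1 + log t) − (1/2)·log(2πt) − Σ_{k=1}^{m} B_{2k}·t^{2k−1}/(2k(2k−1)) is O(t^{2m+1}) as t → 0⁺. Equivalently, as an asymptotic expansion in 1/t, log( Γ(1/t)·(et)^{1/t} / √(2πt) ) = Σ_{k≥1} B_{2k}·t^{2k−1}/(2k(2k−1)). -/
open Filter Real Topology intervalIntegral

noncomputable section StirlingAsympAux

/-- Real Bernoulli polynomial function. -/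
def QB (j : ℕ) (s : ℝ) : ℝ := ((Polynomial.bernoulli j).map (algebraMap ℚ ℝ)).eval s

lemma QB_eval_zero (j : ℕ) : QB j 0 = ((bernoulli j : ℚ) : ℝ) := by
  have h0 : (0:ℝ) = algebraMap ℚ ℝ 0 := by simp
  rw [QB, Polynomial.eval_map, h0, Polynomial.eval₂_at_apply, Polynomial.bernoulli_eval_zero]
  exact eq_ratCast _ _

lemma QB_eval_one (j : ℕ) : QB j 1 = ((bernoulli' j : ℚ) : ℝ) := by
  have h0 : (1:ℝ) = algebraMap ℚ ℝ 1 := by simp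
  rw [QB, Polynomial.eval_map, h0, Polynomial.eval₂_at_apply, Polynomial.bernoulli_eval_one]
  exact eq_ratCast _ _

lemma hasDerivAt_QB (j : ℕ) (s : ℝ) : HasDerivAt (QB (j+1)) ((j+1) * QB j s) s := by
  have h := ((Polynomial.bernoulli (j+1)).map (algebraMap ℚ ℝ)).hasDerivAt s
  refine h.congr_deriv ?_
  rw [Polynomial.derivative_map, Polynomial.derivative_bernoulli_add_one]
  simp [QB, Polynomial.eval_map]

lemma continuous_QB (j : ℕ) : Continuous (QB j) := Polynomial.continuous _

/-- iterated derivatives of `s ↦ log (y + s)`. -/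
def DD (y : ℝ) : ℕ → ℝ → ℝ
  | 0 => fun s => Real.log (y + s)
  | (j+1) => fun s => (-1)^j * (j.factorial : ℝ) * (1/(y+s))^(j+1)

lemma hasDerivAt_DD (y : ℝ) (j : ℕ) (s : ℝ) (hs : 0 < y + s) :
    HasDerivAt (DD y j) (DD y (j+1) s) s := by
  have hne : y + s ≠ 0 := ne_of_gt hs
  have hid : HasDerivAt (fun u : ℝ => y + u) 1 s := (hasDerivAt_id s).const_add y
  cases j with
  | zero =>
    have := (Real.hasDerivAt_log hne).comp s hid
    simpa [DD, Function.comp_def] using this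
  | succ j =>
    have hinv : HasDerivAt (fun u : ℝ => (y+u)⁻¹) (-1/(y+s)^2) s := by
      simpa [Pi.inv_def] using hid.inv hne
    have h2 := (hinv.pow (j+1)).const_mul ((-1:ℝ)^j * (j.factorial : ℝ))
    have hfun : DD y (j+1) = fun u : ℝ => (-1:ℝ)^j * (j.factorial:ℝ) * ((y+u)⁻¹)^(j+1) := by
      funext u; simp [DD, one_div]
    rw [hfun]
    refine h2.congr_deriv (Eq.symm ?_)
    show DD y (j+1+1) s = _
    simp only [DD, Nat.add_sub_cancel, one_div, inv_pow]
    rw [Nat.factorial_succ, pow_succ]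
    push_cast
    field_simp
    ring

lemma continuousOn_DD {y : ℝ} (hy : 0 < y) (j : ℕ) :
    ContinuousOn (DD y j) (Set.Icc 0 1) := by
  have hne : ∀ s ∈ Set.Icc (0:ℝ) 1, y + s ≠ 0 := fun s hs =>
    ne_of_gt (by linarith [hs.1])
  have hcont : ContinuousOn (fun s : ℝ => y + s) (Set.Icc 0 1) :=
    (continuous_const.add continuous_id).continuousOn
  cases j with
  | zero => exact hcont.log hne
  | succ j =>
    exact continuousOn_const.mul (((continuousOn_const.div hcont hne)).pow _)

/-- The Euler–Maclaurin integrals. -/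
def EMI (y : ℝ) (j : ℕ) : ℝ := ((j.factorial : ℝ))⁻¹ * ∫ s in (0:ℝ)..1, QB j s * DD y j s

/-- boundary terms -/
def EMB (y : ℝ) (j : ℕ) : ℝ :=
  (((j+1).factorial : ℝ))⁻¹ * (QB (j+1) 1 * DD y j 1 - QB (j+1) 0 * DD y j 0)

lemma EMI_step {y : ℝ} (hy : 0 < y) (j : ℕ) : EMI y j = EMB y j - EMI y (j+1) := by
  have huIcc : Set.uIcc (0:ℝ) 1 = Set.Icc 0 1 := Set.uIcc_of_le zero_le_one
  have hDD : ∀ s ∈ Set.Ioo (min (0:ℝ) 1) (max 0 1), HasDerivAt (DD y j) (DD y (j+1) s) s := by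
    intro s hs
    rw [min_eq_left zero_le_one, max_eq_right zero_le_one] at hs
    exact hasDerivAt_DD y j s (by linarith [hs.1])
  have hQB : ∀ s ∈ Set.Ioo (min (0:ℝ) 1) (max 0 1),
      HasDerivAt (QB (j+1)) ((j+1) * QB j s) s := fun s _ => hasDerivAt_QB j s
  have hInt1 : IntervalIntegrable (fun s => ((j:ℝ)+1) * QB j s) MeasureTheory.volume 0 1 :=
    (continuous_const.mul (continuous_QB j)).intervalIntegrable 0 1
  have hInt2 : IntervalIntegrable (DD y (j+1)) MeasureTheory.volume 0 1 := by
    apply ContinuousOn.intervalIntegrable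
    rw [huIcc]; exact continuousOn_DD hy (j+1)
  have hcQ : ContinuousOn (QB (j+1)) (Set.uIcc 0 1) := (continuous_QB _).continuousOn
  have hcD : ContinuousOn (DD y j) (Set.uIcc 0 1) := by rw [huIcc]; exact continuousOn_DD hy j
  have key := integral_mul_deriv_eq_deriv_mul_of_hasDerivAt hcQ hcD hQB hDD hInt1 hInt2
  -- key : ∫ s in 0..1, QB (j+1) s * DD y (j+1) s
  --   = QB (j+1) 1 * DD y j 1 - QB (j+1) 0 * DD y j 0 - ∫ s in 0..1, ((j+1) * QB j s) * DD y j s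
  have hfac : ((j+1).factorial : ℝ) = (j+1) * (j.factorial : ℝ) := by
    rw [Nat.factorial_succ]; push_cast; ring
  have h3 : ∫ s in (0:ℝ)..1, ((j:ℝ)+1) * QB j s * DD y j s
      = ((j:ℝ)+1) * ∫ s in (0:ℝ)..1, QB j s * DD y j s := by
    rw [← intervalIntegral.integral_const_mul]
    congr 1; funext s; ring
  have hj1 : ((j:ℝ)+1) ≠ 0 := by positivity
  rw [h3] at key
  rw [EMI, EMI, EMB, hfac, key]
  field_simp
  ring

def cB (k : ℕ) : ℝ := ((bernoulli (2*k+2) : ℚ) : ℝ) / ((2*k+2)*(2*k+1))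

def gS (y : ℝ) : ℝ := (y + 1/2) * (Real.log (y+1) - Real.log y) - 1

lemma EMB_even_zero (y : ℝ) (k : ℕ) : EMB y (2*k+2) = 0 := by
  have hodd : Odd (2*k+2+1) := ⟨k+1, by ring⟩
  have h1 : bernoulli' (2*k+2+1) = 0 := bernoulli'_eq_zero_of_odd hodd (by omega)
  have h0 : bernoulli (2*k+2+1) = 0 := by
    rw [bernoulli_eq_bernoulli'_of_ne_one (by omega), h1]
  rw [EMB, QB_eval_zero, QB_eval_one, h0, h1]
  simp

lemma EMB_zero (y : ℝ) : EMB y 0 = (Real.log (y+1) + Real.log y) / 2 := by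
  rw [EMB, QB_eval_zero, QB_eval_one, bernoulli_one, bernoulli'_one]
  show ((Nat.factorial 1 : ℕ) : ℝ)⁻¹ * _ = _
  simp only [DD, Nat.factorial_one, Nat.cast_one, inv_one, one_mul, add_zero]
  push_cast
  ring

lemma EMB_odd (y : ℝ) (k : ℕ) :
    EMB y (2*k+1) = -(cB k * ((1/y)^(2*k+1) - (1/(y+1))^(2*k+1))) := by
  have h1 : bernoulli' (2*k+1+1) = bernoulli (2*k+2) :=
    (bernoulli_eq_bernoulli'_of_ne_one (by omega)).symm
  have hfac : (((2*k+1+1).factorial : ℕ) : ℝ)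
      = ((2*k+2)*(2*k+1)) * ((2*k).factorial : ℝ) := by
    have : (2*k+1+1).factorial = (2*k+2) * ((2*k+1) * (2*k).factorial) := by
      rw [Nat.factorial_succ, Nat.factorial_succ]
    rw [this]; push_cast; ring
  have hDD : ∀ s : ℝ, DD y (2*k+1) s = ((2*k).factorial : ℝ) * (1/(y+s))^(2*k+1) := by
    intro s
    show (-1:ℝ)^(2*k) * ((2*k).factorial : ℝ) * (1/(y+s))^(2*k+1) = _
    rw [pow_mul]; norm_num
  rw [EMB, QB_eval_zero, QB_eval_one, h1, hfac, hDD, hDD, cB]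
  have hfacpos : (0:ℝ) < ((2*k).factorial : ℝ) := by positivity
  have h2 : ((2*k+2)*(2*k+1) : ℝ) ≠ 0 := by positivity
  field_simp
  ring

lemma EMI_zero_val {y : ℝ} (hy : 0 < y) :
    EMI y 0 = (y+1) * Real.log (y+1) - y * Real.log y - 1 := by
  have hQB0 : ∀ s : ℝ, QB 0 s = 1 := by
    intro s; rw [QB, Polynomial.bernoulli_zero]; simp
  have key : ∫ s in (0:ℝ)..1, Real.log (y+s)
      = (y+1) * Real.log (y+1) - y * Real.log y - 1 := by
    have hderiv : ∀ s ∈ Set.uIcc (0:ℝ) 1,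
        HasDerivAt (fun u : ℝ => (y+u) * Real.log (y+u) - u) (Real.log (y+s)) s := by
      intro s hs
      rw [Set.uIcc_of_le zero_le_one] at hs
      have hpos : 0 < y + s := by linarith [hs.1]
      have hid : HasDerivAt (fun u : ℝ => y + u) 1 s := (hasDerivAt_id s).const_add y
      have hlog : HasDerivAt (fun u : ℝ => Real.log (y+u)) ((y+s)⁻¹) s := by
        simpa [Function.comp_def] using (Real.hasDerivAt_log hpos.ne').comp s hid
      have := (hid.mul hlog).const_add 0
      have h2 := (hid.mul hlog).sub (hasDerivAt_id s)
      refine h2.congr_deriv (Eq.symm ?_)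
      field_simp
      ring
    have hint : IntervalIntegrable (fun s => Real.log (y+s)) MeasureTheory.volume 0 1 := by
      apply ContinuousOn.intervalIntegrable
      rw [Set.uIcc_of_le zero_le_one]
      exact ContinuousOn.log ((continuous_const.add continuous_id).continuousOn)
        (fun s hs => by have := hs.1; dsimp; intro h; linarith)
    have := intervalIntegral.integral_eq_sub_of_hasDerivAt hderiv hint
    rw [this]; ring_nf
  rw [EMI]
  show ((Nat.factorial 0 : ℕ) : ℝ)⁻¹ * _ = _
  simp only [Nat.factorial_zero, Nat.cast_one, inv_one, one_mul]
  rw [← key]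
  congr 1; funext s; rw [hQB0]
  show 1 * DD y 0 s = DD y 0 s
  ring

lemma EM_main {y : ℝ} (hy : 0 < y) (M : ℕ) :
    EMI y 0 = EMB y 0 - (∑ k ∈ Finset.range M, EMB y (2*k+1)) - EMI y (2*M+1) := by
  induction M with
  | zero => simpa using EMI_step hy 0
  | succ M ih =>
    have h1 : EMI y (2*M+1) = EMB y (2*M+1) - EMI y (2*M+2) := EMI_step hy _
    have h2 : EMI y (2*M+2) = - EMI y (2*M+3) := by
      have h := EMI_step hy (2*M+2)
      rw [EMB_even_zero] at h
      rw [show (2*M+3) = 2*M+2+1 from rfl, h]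
      ring
    have h3 : (2*(M+1)+1) = 2*M+3 := by omega
    rw [Finset.sum_range_succ, h3]
    rw [ih, h1, h2]
    ring

lemma EM_estimate (M : ℕ) : ∃ C : ℝ, 0 ≤ C ∧ ∀ y : ℝ, 0 < y →
    |gS y - ∑ k ∈ Finset.range M, cB k * ((1/y)^(2*k+1) - (1/(y+1))^(2*k+1))|
      ≤ C * (1/y)^(2*M+1) := by
  obtain ⟨C₀, hC₀⟩ := (isCompact_Icc (a := (0:ℝ)) (b := 1)).exists_bound_of_continuousOn
    (continuous_QB (2*M+1)).continuousOn
  refine ⟨max C₀ 0, le_max_right _ _, fun y hy => ?_⟩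
  have hgS : gS y - ∑ k ∈ Finset.range M, cB k * ((1/y)^(2*k+1) - (1/(y+1))^(2*k+1))
      = - EMI y (2*M+1) := by
    have h := EM_main hy M
    rw [EMI_zero_val hy, EMB_zero] at h
    have hsum : ∑ k ∈ Finset.range M, EMB y (2*k+1)
        = - ∑ k ∈ Finset.range M, cB k * ((1/y)^(2*k+1) - (1/(y+1))^(2*k+1)) := by
      rw [← Finset.sum_neg_distrib]
      exact Finset.sum_congr rfl fun k _ => by rw [EMB_odd]
    rw [hsum] at h
    rw [gS]
    linarith [h]
  rw [hgS, abs_neg, EMI]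
  have hbound : ∀ s ∈ Set.uIoc (0:ℝ) 1,
      ‖QB (2*M+1) s * DD y (2*M+1) s‖ ≤ (max C₀ 0) * (((2*M).factorial : ℝ) * (1/y)^(2*M+1)) := by
    intro s hs
    rw [Set.uIoc_of_le zero_le_one] at hs
    have hs0 : 0 < s := hs.1
    have hs1 : s ≤ 1 := hs.2
    have hys : 0 < y + s := by linarith
    have hDD : DD y (2*M+1) s = ((2*M).factorial : ℝ) * (1/(y+s))^(2*M+1) := by
      show (-1:ℝ)^(2*M) * ((2*M).factorial : ℝ) * (1/(y+s))^(2*M+1) = _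
      rw [pow_mul]; norm_num
    rw [norm_mul, hDD]
    have h1 : ‖QB (2*M+1) s‖ ≤ max C₀ 0 :=
      le_trans (hC₀ s ⟨le_of_lt hs0, hs1⟩) (le_max_left _ _)
    have h2 : (1/(y+s))^(2*M+1) ≤ (1/y)^(2*M+1) := by
      apply pow_le_pow_left₀ (by positivity)
      apply div_le_div_of_nonneg_left one_pos.le hy
      linarith
    have h3 : ‖((2*M).factorial : ℝ) * (1/(y+s))^(2*M+1)‖
        ≤ ((2*M).factorial : ℝ) * (1/y)^(2*M+1) := by
      rw [norm_mul, Real.norm_natCast, Real.norm_of_nonneg (by positivity)]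
      exact mul_le_mul_of_nonneg_left h2 (by positivity)
    exact mul_le_mul h1 h3 (norm_nonneg _) (le_max_right _ _)
  have hnorm := intervalIntegral.norm_integral_le_of_norm_le_const hbound
  have h5 : |∫ s in (0:ℝ)..1, QB (2*M+1) s * DD y (2*M+1) s|
      ≤ (max C₀ 0) * (((2*M).factorial : ℝ) * (1/y)^(2*M+1)) := by
    simpa using hnorm
  have hfle : (((2*M+1).factorial : ℝ))⁻¹ * ((2*M).factorial : ℝ) ≤ 1 := by
    rw [Nat.factorial_succ, inv_mul_le_iff₀ (by positivity)]
    push_cast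
    have h1 : (0:ℝ) < ((2*M).factorial : ℝ) := by positivity
    have h2 : (0:ℝ) ≤ ((2*M:ℕ) : ℝ) := Nat.cast_nonneg _
    nlinarith
  have hP : (0:ℝ) ≤ max C₀ 0 * (1/y)^(2*M+1) := by positivity
  rw [abs_mul, abs_of_nonneg (inv_nonneg.mpr (by positivity))]
  calc (((2*M+1).factorial : ℝ))⁻¹ * |∫ s in (0:ℝ)..1, QB (2*M+1) s * DD y (2*M+1) s|
      ≤ (((2*M+1).factorial : ℝ))⁻¹ * ((max C₀ 0) * (((2*M).factorial : ℝ) * (1/y)^(2*M+1))) :=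
        mul_le_mul_of_nonneg_left h5 (by positivity)
    _ = ((((2*M+1).factorial : ℝ))⁻¹ * ((2*M).factorial : ℝ)) * (max C₀ 0 * (1/y)^(2*M+1)) := by
        ring
    _ ≤ 1 * (max C₀ 0 * (1/y)^(2*M+1)) := mul_le_mul_of_nonneg_right hfle hP
    _ = max C₀ 0 * (1/y)^(2*M+1) := one_mul _

def muS (x : ℝ) : ℝ :=
  Real.log (Real.Gamma x) - (x - 1/2) * Real.log x + x - (1/2) * Real.log (2*π)

lemma muS_sub {x : ℝ} (hx : 0 < x) : muS x - muS (x+1) = gS x := by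
  have hG : Real.Gamma (x+1) = x * Real.Gamma x := Real.Gamma_add_one hx.ne'
  have hGpos : 0 < Real.Gamma x := Real.Gamma_pos_of_pos hx
  rw [muS, muS, hG, Real.log_mul hx.ne' hGpos.ne', gS]
  ring

lemma muS_nat_tendsto : Tendsto (fun n : ℕ => muS ((n:ℝ)+1)) atTop (𝓝 0) := by
  have heq : ∀ n : ℕ, muS ((n:ℝ)+1)
      = Real.log (Stirling.stirlingSeq (n+1)) - (1/2) * Real.log π := by
    intro n
    have hn1 : (0:ℝ) < (n:ℝ)+1 := by positivity
    have hsf := Stirling.log_stirlingSeq_formula (n+1)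
    rw [muS, Real.Gamma_nat_eq_factorial, hsf]
    have hfact : ((n+1).factorial : ℝ) = ((n:ℝ)+1) * (n.factorial : ℝ) := by
      rw [Nat.factorial_succ]; push_cast; ring
    push_cast
    rw [hfact,
      Real.log_mul (by positivity) (by positivity),
      Real.log_div (by positivity) (Real.exp_ne_zero 1), Real.log_exp,
      Real.log_mul (by norm_num) hn1.ne']
    rw [Real.log_mul hn1.ne' (by positivity)]
    ring
  rw [show (0:ℝ) = Real.log (√π) - (1/2) * Real.log π by
    rw [Real.log_sqrt pi_pos.le]; ring]
  simp_rw [heq]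
  apply Tendsto.sub_const
  have h1 : Tendsto (fun n : ℕ => Stirling.stirlingSeq (n+1)) atTop (𝓝 (√π)) :=
    Stirling.tendsto_stirlingSeq_sqrt_pi.comp (tendsto_add_atTop_nat 1)
  exact (Real.continuousAt_log (by positivity)).tendsto.comp h1

lemma tendsto_mul_log_one_add {s : ℝ} (hs : 0 ≤ s) (b c : ℝ) :
    Tendsto (fun n : ℕ => ((n:ℝ) + c) * Real.log (1 + s/((n:ℝ)+b))) atTop (𝓝 s) := by
  have htop : Tendsto (fun n : ℕ => (n:ℝ) + b) atTop atTop :=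
    tendsto_atTop_add_const_right _ b tendsto_natCast_atTop_atTop
  rcases eq_or_lt_of_le hs with h|h
  · simp only [← h, zero_div, div_zero, add_zero, Real.log_one, mul_zero]
    exact tendsto_const_nhds
  · have h0 : Tendsto (fun n : ℕ => s/((n:ℝ)+b)) atTop (𝓝 0) :=
      Tendsto.div_atTop tendsto_const_nhds htop
    have hev : ∀ᶠ n : ℕ in atTop, 0 < (n:ℝ) + b := htop.eventually_gt_atTop 0
    have hne : ∀ᶠ n : ℕ in atTop, s/((n:ℝ)+b) ≠ 0 :=
      hev.mono fun n hn => (div_pos h hn).ne'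
    have hslope : Tendsto (fun u : ℝ => Real.log (1+u)/u) (𝓝[≠] (0:ℝ)) (𝓝 1) := by
      have hd : HasDerivAt (fun u : ℝ => Real.log (1+u)) 1 0 := by
        have h1 : HasDerivAt (fun u : ℝ => 1 + u) 1 0 := (hasDerivAt_id (0:ℝ)).const_add 1
        have h2 : HasDerivAt Real.log ((1 + id (0:ℝ))⁻¹) (1 + id (0:ℝ)) :=
          Real.hasDerivAt_log (by norm_num)
        have := h2.comp 0 h1
        simpa [Function.comp_def] using this
      have ht := hasDerivAt_iff_tendsto_slope.mp hd
      have heq : slope (fun u : ℝ => Real.log (1+u)) 0 = fun u : ℝ => Real.log (1+u)/u := by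
        funext u; simp [slope_def_field]
      rwa [heq] at ht
    have hcomp : Tendsto (fun n : ℕ => Real.log (1+s/((n:ℝ)+b))/(s/((n:ℝ)+b)))
        atTop (𝓝 1) := by
      apply hslope.comp
      rw [tendsto_nhdsWithin_iff]
      exact ⟨h0, hne.mono fun n hn => hn⟩
    have hmul : Tendsto (fun n : ℕ => ((n:ℝ)+c) * (s/((n:ℝ)+b))) atTop (𝓝 s) := by
      have hq : Tendsto (fun n : ℕ => 1 + (c-b)/((n:ℝ)+b)) atTop (𝓝 1) := by
        have := Tendsto.div_atTop (tendsto_const_nhds (x := c-b)) htop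
        simpa using (this.const_add 1)
      have heq : ∀ᶠ n : ℕ in atTop,
          s * (1 + (c-b)/((n:ℝ)+b)) = ((n:ℝ)+c) * (s/((n:ℝ)+b)) := by
        refine hev.mono fun n hn => ?_
        field_simp
        ring
      have := (hq.const_mul s).congr' heq
      simpa using this
    have heq2 : ∀ᶠ n : ℕ in atTop,
        (((n:ℝ)+c) * (s/((n:ℝ)+b))) * (Real.log (1+s/((n:ℝ)+b))/(s/((n:ℝ)+b)))
          = ((n:ℝ) + c) * Real.log (1 + s/((n:ℝ)+b)) := by
      refine hne.mono fun n hn => ?_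
      have hs' : s ≠ 0 := fun h => hn (by simp [h])
      have hb' : (n:ℝ)+b ≠ 0 := fun h => hn (by simp [h])
      field_simp
    have := (hmul.mul hcomp).congr' heq2
    simpa using this

lemma muS_shift_tendsto (s : ℝ) (hs0 : 0 ≤ s) (hs1 : s < 1) :
    Tendsto (fun n : ℕ => muS ((n:ℝ) + 2 + s)) atTop (𝓝 0) := by
  have hμp : Tendsto (fun n : ℕ => muS ((n:ℝ)+2)) atTop (𝓝 0) := by
    have := muS_nat_tendsto.comp (tendsto_add_atTop_nat 1)
    apply this.congr
    intro n; simp only [Function.comp]; push_cast; ring_nf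
  set f : ℝ → ℝ := Real.log ∘ Real.Gamma with hf
  have hconv := Real.convexOn_log_Gamma
  -- pointwise bounds
  have hkey : ∀ n : ℕ,
      muS ((n:ℝ)+2) + (s - ((n:ℝ)+2+s-1/2) * (Real.log ((n:ℝ)+2+s) - Real.log ((n:ℝ)+2)))
        - s * (Real.log ((n:ℝ)+2) - Real.log ((n:ℝ)+1))
      ≤ muS ((n:ℝ)+2+s) ∧
      muS ((n:ℝ)+2+s) ≤
        muS ((n:ℝ)+2) + (s - ((n:ℝ)+2+s-1/2) * (Real.log ((n:ℝ)+2+s) - Real.log ((n:ℝ)+2))) := by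
    intro n
    set p : ℝ := (n:ℝ)+2 with hp
    have hp0 : (0:ℝ) < p := by positivity
    have hp1 : (0:ℝ) < p - 1 := by
      simp only [hp]
      have : (0:ℝ) ≤ n := Nat.cast_nonneg n
      linarith
    have hps : 0 < p + s := by linarith
    have hΓrec : f p = Real.log (p-1) + f (p-1) := by
      have : Real.Gamma p = (p-1) * Real.Gamma (p-1) := by
        have := Real.Gamma_add_one hp1.ne'
        simpa [sub_add_cancel] using this
      simp only [hf, Function.comp]
      rw [this, Real.log_mul hp1.ne' (Real.Gamma_pos_of_pos hp1).ne']
    have hΓrec2 : f (p+1) = Real.log p + f p := by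
      have : Real.Gamma (p+1) = p * Real.Gamma p := Real.Gamma_add_one hp0.ne'
      simp only [hf, Function.comp]
      rw [this, Real.log_mul hp0.ne' (Real.Gamma_pos_of_pos hp0).ne']
    have hupper : f (p+s) ≤ f p + s * Real.log p := by
      have hcb := hconv.2 (Set.mem_Ioi.mpr hp0) (Set.mem_Ioi.mpr (by linarith : (0:ℝ) < p+1))
        (by linarith : (0:ℝ) ≤ 1-s) hs0 (by ring)
      have harg : (1-s) • p + s • (p+1) = p + s := by simp [smul_eq_mul]; ring
      rw [harg] at hcb
      calc f (p+s) ≤ (1-s) • f p + s • f (p+1) := hcb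
        _ = f p + s * Real.log p := by rw [hΓrec2]; simp [smul_eq_mul]; ring
    have hlower : f p + s * Real.log (p-1) ≤ f (p+s) := by
      rcases eq_or_lt_of_le hs0 with h|h
      · simp [← h]
      · have hsl := hconv.slope_mono_adjacent (Set.mem_Ioi.mpr hp1)
          (Set.mem_Ioi.mpr hps) (by linarith : p - 1 < p) (by linarith : p < p + s)
        have e1 : p - (p-1) = 1 := by ring
        have e2 : p + s - p = s := by ring
        rw [e1, e2, div_one] at hsl
        have : f p - f (p-1) = Real.log (p-1) := by rw [hΓrec]; ring
        rw [this, le_div_iff₀ h] at hsl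
        linarith
    have hμdiff : muS (p+s) - muS p
        = (f (p+s) - f p) - (p+s-1/2) * Real.log (p+s) + (p-1/2) * Real.log p + s := by
      simp only [muS, hf, Function.comp]
      ring
    have hp1' : p - 1 = (n:ℝ)+1 := by rw [hp]; ring
    rw [hp1'] at hlower
    constructor
    · ring_nf at hμdiff hlower ⊢
      linarith
    · ring_nf at hμdiff hupper ⊢
      linarith
  have hE : Tendsto (fun n : ℕ =>
      s - ((n:ℝ)+2+s-1/2) * (Real.log ((n:ℝ)+2+s) - Real.log ((n:ℝ)+2))) atTop (𝓝 0) := by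
    have hL := tendsto_mul_log_one_add hs0 2 (s + 3/2)
    have heq : ∀ n : ℕ, ((n:ℝ)+2+s-1/2) * (Real.log ((n:ℝ)+2+s) - Real.log ((n:ℝ)+2))
        = ((n:ℝ) + (s+3/2)) * Real.log (1 + s/((n:ℝ)+2)) := by
      intro n
      have h2 : (0:ℝ) < (n:ℝ)+2 := by positivity
      have h3 : (0:ℝ) < (n:ℝ)+2+s := by linarith
      rw [← Real.log_div h3.ne' h2.ne']
      congr 2
      · ring
      · field_simp
    simp_rw [heq]
    have := hL.const_sub s
    simpa using this
  have hD : Tendsto (fun n : ℕ => s * (Real.log ((n:ℝ)+2) - Real.log ((n:ℝ)+1))) atTop (𝓝 0) := by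
    have h1 : Tendsto (fun n : ℕ => 1 + 1/((n:ℝ)+1)) atTop (𝓝 1) := by
      have htop : Tendsto (fun n : ℕ => (n:ℝ) + 1) atTop atTop :=
        tendsto_atTop_add_const_right _ 1 tendsto_natCast_atTop_atTop
      simpa using (Tendsto.div_atTop (tendsto_const_nhds (x := (1:ℝ))) htop).const_add 1
    have h2 : Tendsto (fun n : ℕ => Real.log (1 + 1/((n:ℝ)+1))) atTop (𝓝 0) := by
      have := (Real.continuousAt_log one_ne_zero).tendsto.comp h1
      simpa [Function.comp_def] using this
    have heq : ∀ n : ℕ, Real.log ((n:ℝ)+2) - Real.log ((n:ℝ)+1)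
        = Real.log (1 + 1/((n:ℝ)+1)) := by
      intro n
      have ha : (0:ℝ) < (n:ℝ)+1 := by positivity
      have hb : (0:ℝ) < (n:ℝ)+2 := by positivity
      rw [← Real.log_div hb.ne' ha.ne']
      congr 1
      field_simp
      ring
    simp_rw [heq]
    simpa using h2.const_mul s
  have hlow : Tendsto (fun n : ℕ => muS ((n:ℝ)+2)
      + (s - ((n:ℝ)+2+s-1/2) * (Real.log ((n:ℝ)+2+s) - Real.log ((n:ℝ)+2)))
      - s * (Real.log ((n:ℝ)+2) - Real.log ((n:ℝ)+1))) atTop (𝓝 0) := by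
    simpa using (hμp.add hE).sub hD
  have hup : Tendsto (fun n : ℕ => muS ((n:ℝ)+2)
      + (s - ((n:ℝ)+2+s-1/2) * (Real.log ((n:ℝ)+2+s) - Real.log ((n:ℝ)+2)))) atTop (𝓝 0) := by
    simpa using hμp.add hE
  exact tendsto_of_tendsto_of_tendsto_of_le_of_le hlow hup
    (fun n => (hkey n).1) (fun n => (hkey n).2)

lemma muS_add_nat_tendsto {x : ℝ} (hx : 0 < x) :
    Tendsto (fun N : ℕ => muS (x + N)) atTop (𝓝 0) := by
  set K := Nat.floor x with hK
  set s := x - K with hsdef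
  have hs0 : 0 ≤ s := sub_nonneg.mpr (Nat.floor_le hx.le)
  have hs1 : s < 1 := by
    have := Nat.lt_floor_add_one x
    simp only [hsdef]
    linarith
  have hb := (muS_shift_tendsto s hs0 hs1).comp (tendsto_add_atTop_nat K)
  rw [← Filter.tendsto_add_atTop_iff_nat 2]
  apply hb.congr
  intro n
  simp only [Function.comp]
  congr 1
  push_cast
  simp only [hsdef]
  ring

lemma pow_inv_succ_le {p : ℕ} (hp : 1 ≤ p) {y : ℝ} (hy : 0 < y) :
    (p:ℝ) * (1/(y+1))^(p+1) ≤ (1/y)^p - (1/(y+1))^p := by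
  have hy1 : (0:ℝ) < y + 1 := by linarith
  have hb : (1:ℝ) + p * (1/(y+1)) ≤ (1 + 1/y)^p := by
    calc (1:ℝ) + p * (1/(y+1)) ≤ 1 + p * (1/y) := by
          have : (1:ℝ)/(y+1) ≤ 1/y := by
            apply div_le_div_of_nonneg_left one_pos.le hy; linarith
          nlinarith [Nat.cast_nonneg (α := ℝ) p]
      _ ≤ (1 + 1/y)^p := one_add_mul_le_pow
            (by have := (one_div_pos.mpr hy).le; linarith) p
  have hsplit : (1/y)^p = (1 + 1/y)^p * (1/(y+1))^p := by
    rw [← mul_pow]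
    congr 1
    field_simp
  have hpow : (0:ℝ) ≤ (1/(y+1))^p := by positivity
  calc (p:ℝ) * (1/(y+1))^(p+1)
      = ((1:ℝ) + p * (1/(y+1))) * (1/(y+1))^p - (1/(y+1))^p := by
        rw [pow_succ]; ring
    _ ≤ (1 + 1/y)^p * (1/(y+1))^p - (1/(y+1))^p := by nlinarith
    _ = (1/y)^p - (1/(y+1))^p := by rw [hsplit]

lemma tail_sum_le {p : ℕ} (hp : 1 ≤ p) {x : ℝ} (hx : 1 ≤ x) (N : ℕ) :
    ∑ n ∈ Finset.range N, (1/(x+n))^(p+1) ≤ 2 * (1/x)^p := by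
  have hx0 : (0:ℝ) < x := lt_of_lt_of_le one_pos hx
  have hT : ∀ N : ℕ, ∑ n ∈ Finset.range N, (1/(x+(n:ℝ)+1))^(p+1)
      ≤ (1/(p:ℝ)) * ((1/x)^p - (1/(x+(N:ℝ)))^p) := by
    intro N
    induction N with
    | zero => simp
    | succ N ih =>
      rw [Finset.sum_range_succ]
      have hy : (0:ℝ) < x + N := by positivity
      have hkey := pow_inv_succ_le hp hy
      have hps : (0:ℝ) < (p:ℝ) := by exact_mod_cast hp.trans_lt' zero_lt_one
      have h2 : (1/(x+(N:ℝ)+1))^(p+1) ≤ (1/(p:ℝ)) * ((1/(x+(N:ℝ)))^p - (1/(x+(N:ℝ)+1))^p) := by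
        have hm := mul_le_mul_of_nonneg_left hkey (le_of_lt (one_div_pos.mpr hps))
        calc (1/(x+(N:ℝ)+1))^(p+1)
            = (1/(p:ℝ)) * ((p:ℝ) * (1/(x+(N:ℝ)+1))^(p+1)) := by field_simp
          _ ≤ _ := hm
      push_cast
      calc (∑ n ∈ Finset.range N, (1/(x+(n:ℝ)+1))^(p+1)) + (1/(x+(N:ℝ)+1))^(p+1)
          ≤ (1/(p:ℝ)) * ((1/x)^p - (1/(x+(N:ℝ)))^p)
            + (1/(p:ℝ)) * ((1/(x+(N:ℝ)))^p - (1/(x+(N:ℝ)+1))^p) := add_le_add ih h2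
        _ = (1/(p:ℝ)) * ((1/x)^p - (1/(x+((N:ℝ)+1)))^p) := by ring
  cases N with
  | zero => simp only [Finset.range_zero, Finset.sum_empty]; positivity
  | succ N =>
    rw [Finset.sum_range_succ']
    have hps : (0:ℝ) < (p:ℝ) := by exact_mod_cast hp.trans_lt' zero_lt_one
    have h1 : ((1:ℝ)/(x+(0:ℕ)))^(p+1) ≤ (1/x)^p := by
      push_cast [add_zero]
      apply pow_le_pow_of_le_one (by positivity) _ (by omega)
      rw [div_le_one hx0]
      linarith
    have h2 : ∑ n ∈ Finset.range N, ((1:ℝ)/(x+(n+1:ℕ)))^(p+1) ≤ (1/x)^p := by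
      have := hT N
      have hpos : (0:ℝ) ≤ (1/(x+(N:ℝ)))^p := by positivity
      have hfrac : (1/(p:ℝ)) * ((1/x)^p - (1/(x+(N:ℝ)))^p) ≤ (1/x)^p := by
        have hone : (1/(p:ℝ)) ≤ 1 := by
          apply div_le_one_of_le₀ _ (by positivity)
          exact_mod_cast hp
        have hnn : (0:ℝ) ≤ (1/x)^p - (1/(x+(N:ℝ)))^p := by
          have : (1/(x+(N:ℝ)))^p ≤ (1/x)^p := by
            apply pow_le_pow_left₀ (by positivity)
            apply div_le_div_of_nonneg_left one_pos.le hx0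
            · linarith [Nat.cast_nonneg (α := ℝ) N]
          linarith
        nlinarith
      calc ∑ n ∈ Finset.range N, ((1:ℝ)/(x+(n+1:ℕ)))^(p+1)
          = ∑ n ∈ Finset.range N, (1/(x+(n:ℝ)+1))^(p+1) := by
            apply Finset.sum_congr rfl; intro n _; push_cast; ring_nf
        _ ≤ (1/(p:ℝ)) * ((1/x)^p - (1/(x+(N:ℝ)))^p) := hT N
        _ ≤ (1/x)^p := hfrac
    calc (∑ n ∈ Finset.range N, ((1:ℝ)/(x+(n+1:ℕ)))^(p+1)) + ((1:ℝ)/(x+(0:ℕ)))^(p+1)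
        ≤ (1/x)^p + (1/x)^p := add_le_add h2 h1
      _ = 2 * (1/x)^p := by ring

lemma sum_gS {x : ℝ} (hx : 0 < x) (N : ℕ) :
    ∑ n ∈ Finset.range N, gS (x + n) = muS x - muS (x + N) := by
  induction N with
  | zero => simp
  | succ N ih =>
    rw [Finset.sum_range_succ, ih]
    have hxN : (0:ℝ) < x + N := by positivity
    have h := muS_sub hxN
    push_cast
    have heq : x + ((N:ℝ)+1) = x + (N:ℝ) + 1 := by ring
    rw [heq]
    linarith [h]

lemma main_est (M : ℕ) (hM : 1 ≤ M) : ∃ C : ℝ, 0 ≤ C ∧ ∀ x : ℝ, 1 ≤ x →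
    |muS x - ∑ k ∈ Finset.range M, cB k * (1/x)^(2*k+1)| ≤ C * (1/x)^(2*M) := by
  obtain ⟨C, hC0, hC⟩ := EM_estimate M
  refine ⟨2*C, by linarith, fun x hx => ?_⟩
  have hx0 : (0:ℝ) < x := lt_of_lt_of_le one_pos hx
  -- partial sums of remainders tend to the target quantity
  set A := muS x - ∑ k ∈ Finset.range M, cB k * (1/x)^(2*k+1) with hA
  set R : ℕ → ℝ := fun n => gS (x+n)
    - ∑ k ∈ Finset.range M, cB k * ((1/(x+n))^(2*k+1) - (1/(x+n+1))^(2*k+1)) with hR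
  have hsumR : ∀ N : ℕ, ∑ n ∈ Finset.range N, R n
      = (muS x - muS (x+N))
        - ∑ k ∈ Finset.range M, cB k * ((1/x)^(2*k+1) - (1/(x+N))^(2*k+1)) := by
    intro N
    rw [Finset.sum_sub_distrib, sum_gS hx0]
    congr 1
    rw [Finset.sum_comm]
    apply Finset.sum_congr rfl
    intro k _
    rw [← Finset.mul_sum]
    congr 1
    have h0 := Finset.sum_range_sub' (f := fun n : ℕ => (1/(x+(n:ℝ)))^(2*k+1)) N
    simp only [Nat.cast_zero, add_zero] at h0
    rw [← h0]
    apply Finset.sum_congr rfl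
    intro n _
    push_cast
    ring_nf
  have htendsto : Tendsto (fun N : ℕ => ∑ n ∈ Finset.range N, R n) atTop (𝓝 A) := by
    simp_rw [hsumR]
    rw [hA]
    have h1 : Tendsto (fun N : ℕ => muS x - muS (x+N)) atTop (𝓝 (muS x)) := by
      simpa using (muS_add_nat_tendsto hx0).const_sub (muS x)
    have h2 : Tendsto (fun N : ℕ =>
        ∑ k ∈ Finset.range M, cB k * ((1/x)^(2*k+1) - (1/(x+N))^(2*k+1))) atTop
        (𝓝 (∑ k ∈ Finset.range M, cB k * (1/x)^(2*k+1))) := by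
      apply tendsto_finset_sum
      intro k _
      have hz : Tendsto (fun N : ℕ => (1/(x+(N:ℝ)))^(2*k+1)) atTop (𝓝 0) := by
        have htop : Tendsto (fun N : ℕ => x + (N:ℝ)) atTop atTop :=
          tendsto_atTop_add_const_left _ x tendsto_natCast_atTop_atTop
        have := (Tendsto.div_atTop (tendsto_const_nhds (x := (1:ℝ))) htop).pow (2*k+1)
        simpa [zero_pow] using this
      have := ((hz.const_sub ((1/x)^(2*k+1))).const_mul (cB k))
      simpa using this
    have := h1.sub h2
    exact this
  have hbound : ∀ N : ℕ, |∑ n ∈ Finset.range N, R n| ≤ 2*C * (1/x)^(2*M) := by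
    intro N
    calc |∑ n ∈ Finset.range N, R n| ≤ ∑ n ∈ Finset.range N, |R n| :=
          Finset.abs_sum_le_sum_abs _ _
      _ ≤ ∑ n ∈ Finset.range N, C * (1/(x+n))^(2*M+1) := by
          apply Finset.sum_le_sum
          intro n _
          have hxn : (0:ℝ) < x + n := by positivity
          have := hC (x+n) hxn
          simpa [hR] using this
      _ = C * ∑ n ∈ Finset.range N, (1/(x+n))^(2*M+1) := by rw [Finset.mul_sum]
      _ ≤ C * (2 * (1/x)^(2*M)) := by
          apply mul_le_mul_of_nonneg_left _ hC0
          exact tail_sum_le (by omega) hx N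
      _ = 2*C * (1/x)^(2*M) := by ring
  have : |A| ≤ 2*C * (1/x)^(2*M) :=
    le_of_tendsto htendsto.abs (Filter.Eventually.of_forall hbound)
  exact this

end StirlingAsympAux

/-- Stirling-type asymptotic expansion: for every positive integer `m`,
`log Γ(1/t) + (1/t)(1 + log t) - (1/2) log(2πt) - ∑_{k=1}^{m} B_{2k} t^{2k-1}/(2k(2k-1))`
is `O(t^{2m+1})` as `t → 0⁺`; equivalently,
`log(Γ(1/t)(et)^{1/t}/√(2πt)) = ∑_{k≥1} B_{2k} t^{2k-1}/(2k(2k-1))`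
as an asymptotic expansion in `1/t`. -/
theorem stmt7 (m : ℕ) (hm : 0 < m) :
    (fun t : ℝ =>
        Real.log (Real.Gamma (1 / t)) + (1 / t) * (1 + Real.log t) -
          (1 / 2) * Real.log (2 * Real.pi * t) -
          ∑ k ∈ Finset.Icc 1 m,
            (bernoulli (2 * k) : ℝ) * t ^ (2 * k - 1) / ((2 * k * (2 * k - 1) : ℕ) : ℝ))
      =O[nhdsWithin 0 (Set.Ioi 0)] fun t : ℝ => t ^ (2 * m + 1) := by
  obtain ⟨C, hC0, hC⟩ := main_est (m+1) (by omega)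
  rw [Asymptotics.isBigO_iff]
  refine ⟨C + |cB m|, ?_⟩
  have hmem : Set.Ioc (0:ℝ) 1 ∈ nhdsWithin (0:ℝ) (Set.Ioi 0) :=
    Ioc_mem_nhdsGT_of_mem (by norm_num : (0:ℝ) ∈ Set.Ico (0:ℝ) 1)
  filter_upwards [hmem] with t ht
  obtain ⟨ht0, ht1⟩ := ht
  have hx : (1:ℝ) ≤ 1/t := by
    rw [le_div_iff₀ ht0]; linarith
  have hinv : 1/(1/t) = t := by field_simp
  -- identify the main expression with muS (1/t)
  have hclaim1 : Real.log (Real.Gamma (1/t)) + (1/t) * (1 + Real.log t)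
      - (1/2) * Real.log (2 * Real.pi * t) = muS (1/t) := by
    rw [muS]
    rw [Real.log_mul (by positivity) ht0.ne', one_div, Real.log_inv]
    ring
  -- identify the sum
  have hclaim2 : ∑ k ∈ Finset.Icc 1 m,
      (bernoulli (2 * k) : ℝ) * t ^ (2 * k - 1) / ((2 * k * (2 * k - 1) : ℕ) : ℝ)
      = ∑ k ∈ Finset.range m, cB k * t^(2*k+1) := by
    rw [← Finset.Ico_add_one_right_eq_Icc, Finset.sum_Ico_eq_sum_range]
    simp only [Nat.add_sub_cancel]
    apply Finset.sum_congr rfl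
    intro i _
    have e1 : 2 * (1+i) = 2*i+2 := by omega
    have e2 : 2*i+2 - 1 = 2*i+1 := by omega
    rw [e1, e2, cB]
    push_cast
    ring
  have hkey := hC (1/t) hx
  rw [Finset.sum_range_succ, hinv] at hkey
  -- |muS (1/t) - Σ_{k<m} cB k t^{2k+1} - cB m t^{2m+1}| ≤ C t^{2(m+1)}
  have habs : |muS (1/t) - ∑ k ∈ Finset.range m, cB k * t^(2*k+1)|
      ≤ C * t^(2*(m+1)) + |cB m| * t^(2*m+1) := by
    have h1 : muS (1/t) - ∑ k ∈ Finset.range m, cB k * t^(2*k+1)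
        = (muS (1/t) - (∑ k ∈ Finset.range m, cB k * t^(2*k+1) + cB m * t^(2*m+1)))
          + cB m * t^(2*m+1) := by
      ring
    rw [h1]
    calc |_ + cB m * t^(2*m+1)| ≤ _ + |cB m * t^(2*m+1)| := abs_add_le _ _
      _ ≤ C * t^(2*(m+1)) + |cB m| * t^(2*m+1) := by
        apply add_le_add
        · exact hkey
        · rw [abs_mul, abs_of_pos (by positivity : (0:ℝ) < t^(2*m+1))]
  have hfinal : C * t^(2*(m+1)) + |cB m| * t^(2*m+1) ≤ (C + |cB m|) * t^(2*m+1) := by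
    have : t^(2*(m+1)) ≤ t^(2*m+1) :=
      pow_le_pow_of_le_one ht0.le ht1 (by omega)
    nlinarith [abs_nonneg (cB m), pow_pos ht0 (2*m+1)]
  rw [hclaim1, hclaim2]
  rw [Real.norm_eq_abs, Real.norm_eq_abs, abs_of_pos (by positivity : (0:ℝ) < t^(2*m+1))]
  calc |muS (1/t) - ∑ k ∈ Finset.range m, cB k * t^(2*k+1)|
      ≤ C * t^(2*(m+1)) + |cB m| * t^(2*m+1) := habs
    _ ≤ (C + |cB m|) * t^(2*m+1) := hfinal
end

section
/- Let B : ℝ \ {0} → ℝ be the function B(t) = t/(e^t − 1). Then for every real t ≠ 0, B(t)·B(2t) = (1−t)·B(t) − t·B′(t) − (t/2)·B(2t), where B′(t) denotes the derivative of B at t. -/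
/-- The Bernoulli generating function `B(t) = t/(e^t - 1)` satisfies
`B(t) B(2t) = (1 - t) B(t) - t B'(t) - (t/2) B(2t)` for every real `t ≠ 0`. -/
theorem stmt10 (t : ℝ) (ht : t ≠ 0) :
    (t / (Real.exp t - 1)) * (2 * t / (Real.exp (2 * t) - 1)) =
      (1 - t) * (t / (Real.exp t - 1)) -
        t * deriv (fun s : ℝ => s / (Real.exp s - 1)) t -
        (t / 2) * (2 * t / (Real.exp (2 * t) - 1)) := by
  have h1 : Real.exp t - 1 ≠ 0 := by
    intro h
    have h0 : Real.exp t = Real.exp 0 := by rw [Real.exp_zero]; linarith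
    exact ht (Real.exp_injective h0)
  have h2 : Real.exp t + 1 ≠ 0 := by positivity
  have h2t : Real.exp (2 * t) - 1 = (Real.exp t - 1) * (Real.exp t + 1) := by
    rw [two_mul, Real.exp_add]; ring
  have hd : HasDerivAt (fun s : ℝ => s / (Real.exp s - 1))
      ((1 * (Real.exp t - 1) - t * Real.exp t) / (Real.exp t - 1) ^ 2) t := by
    exact ((hasDerivAt_id t).div ((Real.hasDerivAt_exp t).sub_const 1) h1)
  rw [hd.deriv, h2t]
  field_simp
  ring
end

section
/- For every integer n ≥ 1, Σ_{r=0}^{n} C(n, r)·2^r·B_r·B_{n−r} = (1−n)·B_n − n·B_{n−1} − n·2^{n−2}·B_{n−1}. -/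
open PowerSeries Nat

lemma hde : d⁄dX ℚ (exp ℚ) = exp ℚ := by
  ext n
  rw [coeff_derivative, coeff_exp, coeff_exp]
  simp only [Algebra.algebraMap_self, RingHom.id_apply]
  field_simp [Nat.factorial_succ]
  rw [Nat.factorial_succ, Nat.cast_mul, Nat.cast_succ]

lemma h2 : rescale (2:ℚ) (bernoulliPowerSeries ℚ) * ((exp ℚ)^2 - 1) = C (2:ℚ) * X := by
  have h1 := bernoulliPowerSeries_mul_exp_sub_one ℚ
  have := congrArg (rescale (2:ℚ)) h1
  rw [map_mul, map_sub, map_one, rescale_X] at this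
  rw [exp_pow_eq_rescale_exp]
  push_cast
  exact this

lemma h3 : d⁄dX ℚ (bernoulliPowerSeries ℚ) * (exp ℚ - 1) + bernoulliPowerSeries ℚ * exp ℚ = 1 := by
  have h1 := bernoulliPowerSeries_mul_exp_sub_one ℚ
  have := congrArg (d⁄dX ℚ) h1
  rw [Derivation.leibniz, derivative_X] at this
  simp only [map_sub, Derivation.map_one_eq_zero, sub_zero, hde, smul_eq_mul] at this
  linear_combination this

lemma hE1 : (exp ℚ - 1 : ℚ⟦X⟧) ≠ 0 := by
  intro h
  have := congrArg (coeff 1) h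
  simp [coeff_exp] at this

lemma hE2 : (exp ℚ + 1 : ℚ⟦X⟧) ≠ 0 := by
  intro h
  have := congrArg (constantCoeff) h
  simp [constantCoeff_exp] at this

lemma key : 2 * (rescale (2:ℚ) (bernoulliPowerSeries ℚ) * bernoulliPowerSeries ℚ) =
    2 * bernoulliPowerSeries ℚ - 2 * (X * d⁄dX ℚ (bernoulliPowerSeries ℚ))
      - 2 * (X * bernoulliPowerSeries ℚ) - X * rescale (2:ℚ) (bernoulliPowerSeries ℚ) := by
  have h1 := bernoulliPowerSeries_mul_exp_sub_one ℚ
  have h2' : rescale (2:ℚ) (bernoulliPowerSeries ℚ) * ((exp ℚ)^2 - 1) = 2 * X := by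
    rw [h2, map_ofNat]
  have h3' := h3
  have hD : ((exp ℚ - 1)^2 * (exp ℚ + 1) : ℚ⟦X⟧) ≠ 0 :=
    mul_ne_zero (pow_ne_zero 2 hE1) hE2
  apply mul_right_cancel₀ hD
  set a := bernoulliPowerSeries ℚ
  set b := rescale (2:ℚ) (bernoulliPowerSeries ℚ)
  set E := exp ℚ
  set a' := d⁄dX ℚ (bernoulliPowerSeries ℚ)
  linear_combination (2*b*(E-1)*(E+1) - 2*X*E*(E+1) - 2*(E-1)*(E+1) + 2*X*(E-1)*(E+1)) * h1
    + (2*X + X*(E-1)) * h2' + (2*X*(E-1)*(E+1)) * h3'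

lemma ha : ∀ k : ℕ, coeff k (bernoulliPowerSeries ℚ) = bernoulli k / k ! := by
  intro k
  simp [bernoulliPowerSeries, coeff_mk]

/-- For `n ≥ 1`, `∑_{r=0}^{n} C(n,r) 2^r B_r B_{n-r}
      = (1-n) B_n - n B_{n-1} - n 2^{n-2} B_{n-1}`,
where `2^{n-2}` is interpreted in `ℚ` (integer exponent). -/
theorem stmt12 (n : ℕ) (hn : 1 ≤ n) :
    ∑ r ∈ Finset.range (n + 1),
        (n.choose r : ℚ) * 2 ^ r * bernoulli r * bernoulli (n - r) =
      (1 - (n : ℚ)) * bernoulli n - (n : ℚ) * bernoulli (n - 1) -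
        (n : ℚ) * (2 : ℚ) ^ ((n : ℤ) - 2) * bernoulli (n - 1) := by
  obtain ⟨m, rfl⟩ : ∃ m, n = m + 1 := ⟨n - 1, (Nat.succ_pred_eq_of_pos hn).symm⟩
  have hc := congrArg (coeff (m + 1)) key
  have h2c : ∀ (k : ℕ) (f : ℚ⟦X⟧), coeff k (2 * f) = 2 * coeff k f := by
    intro k f; rw [← map_ofNat (C (R := ℚ)) 2, coeff_C_mul]
  rw [map_sub, map_sub, map_sub] at hc
  simp only [h2c, coeff_succ_X_mul, coeff_derivative] at hc
  rw [coeff_mul, Finset.Nat.sum_antidiagonal_eq_sum_range_succ_mk] at hc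
  simp only [coeff_rescale, ha] at hc
  have hfac : ∀ k : ℕ, (k ! : ℚ) ≠ 0 := fun k => Nat.cast_ne_zero.mpr k.factorial_ne_zero
  have hstep : ∑ r ∈ Finset.range (m + 1 + 1),
      ((m+1).choose r : ℚ) * 2 ^ r * bernoulli r * bernoulli (m + 1 - r)
      = ((m+1) ! : ℚ) * ∑ k ∈ Finset.range (m + 1 + 1),
          2 ^ k * (bernoulli k / k !) * (bernoulli (m + 1 - k) / (m + 1 - k) !) := by
    rw [Finset.mul_sum]
    refine Finset.sum_congr rfl fun k hk => ?_
    have hk' : k ≤ m + 1 := Nat.lt_succ_iff.mp (Finset.mem_range.mp hk)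
    have hch := Nat.choose_mul_factorial_mul_factorial hk'
    have hch' : ((m+1).choose k : ℚ) * k ! * (m + 1 - k) ! = (m+1) ! := by exact_mod_cast congrArg Nat.cast hch
    field_simp
    linear_combination (bernoulli k * bernoulli (m + 1 - k)) * hch'
  rw [hstep]
  have hrw : ((m+1) ! : ℚ) * ∑ k ∈ Finset.range (m + 1 + 1),
      2 ^ k * (bernoulli k / k !) * (bernoulli (m + 1 - k) / (m + 1 - k) !)
      = ((m+1) ! : ℚ) / 2 * (2 * ∑ k ∈ Finset.range (m + 1 + 1),
          2 ^ k * (bernoulli k / k !) * (bernoulli (m + 1 - k) / (m + 1 - k) !)) := by ring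
  rw [hrw, hc]
  have hfs : ((m+1) ! : ℚ) = (m + 1) * m ! := by exact_mod_cast Nat.factorial_succ m
  have hzp : (2:ℚ) ^ ((m:ℤ) + 1 - 2) = 2 ^ m / 2 := by
    have : (m:ℤ) + 1 - 2 = (m:ℤ) - 1 := by ring
    rw [this, zpow_sub₀ (two_ne_zero), zpow_natCast, zpow_one]
  push_cast
  rw [hzp]
  rw [hfs]
  have h0 : (m:ℚ) + 1 ≠ 0 := by positivity
  field_simp
end

section
/- For every odd integer g ≥ 1, (g+1)·2^g·B_g + Σ_{r=0}^{g+1} C(g+1, r)·2^r·B_r·B_{g+1−r} = −g·B_{g+1}. -/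
open PowerSeries Finset

lemma my_derivative_exp : d⁄dX ℚ (PowerSeries.exp ℚ) = PowerSeries.exp ℚ := by
  ext n
  rw [PowerSeries.coeff_derivative, PowerSeries.coeff_exp, PowerSeries.coeff_exp]
  simp [Nat.factorial_succ]
  field_simp

lemma my_key : 2 * (rescale (2:ℚ) (bernoulliPowerSeries ℚ) * bernoulliPowerSeries ℚ)
      + PowerSeries.X * rescale (2:ℚ) (bernoulliPowerSeries ℚ)
    = 2 * ((1 - PowerSeries.X) * bernoulliPowerSeries ℚ
      - PowerSeries.X * d⁄dX ℚ (bernoulliPowerSeries ℚ)) := by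
  set B := bernoulliPowerSeries ℚ with hB
  set E := PowerSeries.exp ℚ - 1 with hE
  have h1 : B * E = PowerSeries.X := bernoulliPowerSeries_mul_exp_sub_one ℚ
  have hresE : rescale (2:ℚ) E = E * (E + 2) := by
    have h2exp : rescale (2:ℚ) (PowerSeries.exp ℚ)
        = PowerSeries.exp ℚ * PowerSeries.exp ℚ := by
      have h11 : (2:ℚ) = 1 + 1 := by norm_num
      rw [h11, ← PowerSeries.exp_mul_exp_eq_exp_add (1:ℚ) 1, PowerSeries.rescale_one]
      rfl
    rw [hE, map_sub, map_one, h2exp]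
    ring
  have h2 : rescale (2:ℚ) B * (E * (E + 2)) = 2 * PowerSeries.X := by
    have h := congrArg (rescale (2:ℚ)) h1
    rw [map_mul, hresE, rescale_X] at h
    rw [h, map_ofNat]
  have h3 : d⁄dX ℚ B * E + B * (E + 1) = 1 := by
    have h := congrArg (d⁄dX ℚ) h1
    rw [Derivation.leibniz, PowerSeries.derivative_X] at h
    have hdE : d⁄dX ℚ E = E + 1 := by
      rw [hE, map_sub, Derivation.map_one_eq_zero, my_derivative_exp]; ring
    rw [hdE, smul_eq_mul, smul_eq_mul] at h
    linear_combination h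
  have hEne : E ≠ 0 := by
    intro h
    have := congrArg (PowerSeries.coeff 1) h
    simp [hE, PowerSeries.coeff_exp] at this
  have hE2ne : E + 2 ≠ 0 := by
    intro h
    have := congrArg (PowerSeries.constantCoeff) h
    simp [hE, PowerSeries.constantCoeff_exp, map_ofNat] at this
  have hM : E * E * (E + 2) ≠ 0 := by
    exact mul_ne_zero (mul_ne_zero hEne hEne) hE2ne
  apply mul_right_cancel₀ hM
  linear_combination (4*PowerSeries.X - 2*PowerSeries.X*(E+1)*(E+2)
      - 2*(1-PowerSeries.X)*(E*E+2*E)) * h1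
    + (2*B*E + PowerSeries.X*E) * h2
    + (2*PowerSeries.X*(E*E+2*E)) * h3

lemma coeff_bps (n : ℕ) : PowerSeries.coeff n (bernoulliPowerSeries ℚ)
    = bernoulli n / (n.factorial : ℚ) := by
  simp [bernoulliPowerSeries, PowerSeries.coeff_mk]

lemma my_conv (m : ℕ) :
    2 * ∑ r ∈ Finset.range (m+2),
        (((m+1).choose r : ℚ)) * 2^r * bernoulli r * bernoulli (m+1-r)
      + ((m:ℚ)+1) * 2^m * bernoulli m
    = 2 * (bernoulli (m+1) - ((m:ℚ)+1) * bernoulli m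
        - ((m:ℚ)+1) * bernoulli (m+1)) := by
  have hkey := my_key
  rw [show (2:ℚ⟦X⟧) = PowerSeries.C (2:ℚ) from (map_ofNat _ 2).symm] at hkey
  have h := congrArg (PowerSeries.coeff (R := ℚ) (m+1)) hkey
  rw [map_add, PowerSeries.coeff_C_mul, PowerSeries.coeff_succ_X_mul,
    PowerSeries.coeff_C_mul, map_sub, sub_mul, one_mul, map_sub,
    PowerSeries.coeff_succ_X_mul, PowerSeries.coeff_succ_X_mul,
    PowerSeries.coeff_derivative, PowerSeries.coeff_mul,
    Finset.Nat.sum_antidiagonal_eq_sum_range_succ_mk] at h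
  simp only [PowerSeries.coeff_rescale, coeff_bps] at h
  have hrange : Finset.range (m+1).succ = Finset.range (m+2) := by norm_num
  rw [hrange] at h
  have hfact : ((m+1).factorial : ℚ) = ((m:ℚ)+1) * m.factorial := by
    push_cast [Nat.factorial_succ]; ring
  have hm0 : ((m.factorial : ℚ)) ≠ 0 := Nat.cast_ne_zero.mpr m.factorial_ne_zero
  have hS : ∑ r ∈ Finset.range (m+2),
        (((m+1).choose r : ℚ)) * 2^r * bernoulli r * bernoulli (m+1-r)
      = ((m+1).factorial : ℚ) * ∑ x ∈ Finset.range (m+2),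
          2 ^ x * (bernoulli x / x.factorial) * (bernoulli (m + 1 - x) / (m + 1 - x).factorial) := by
    rw [Finset.mul_sum]
    apply Finset.sum_congr rfl
    intro i hi
    have hle : i ≤ m+1 := by
      simp only [Finset.mem_range] at hi; omega
    rw [Nat.cast_choose ℚ hle]
    have h1 : ((i.factorial : ℚ)) ≠ 0 := Nat.cast_ne_zero.mpr i.factorial_ne_zero
    have h2 : (((m+1-i).factorial : ℚ)) ≠ 0 := Nat.cast_ne_zero.mpr (m+1-i).factorial_ne_zero
    field_simp
  rw [hS, hfact]
  rw [hfact] at h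
  set S := ∑ x ∈ Finset.range (m + 2),
      2 ^ x * (bernoulli x / (x.factorial : ℚ)) * (bernoulli (m + 1 - x) / ((m + 1 - x).factorial : ℚ)) with hSdef
  clear_value S
  have hm1 : ((m:ℚ)+1) ≠ 0 := by positivity
  field_simp at h
  have hc : ((m:ℚ)+1) * ((m.factorial:ℚ))^3 ≠ 0 := by positivity
  apply mul_left_cancel₀ hc
  linear_combination ((m:ℚ)+1) * ((m.factorial:ℚ))^3 * h
  

/-- For every odd `g ≥ 1`,
`(g+1) 2^g B_g + ∑_{r=0}^{g+1} C(g+1,r) 2^r B_r B_{g+1-r} = -g B_{g+1}`. -/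
theorem stmt14 (g : ℕ) (hg : 1 ≤ g) (hodd : Odd g) :
    ((g : ℚ) + 1) * 2 ^ g * bernoulli g +
        ∑ r ∈ Finset.range (g + 2),
          ((g + 1).choose r : ℚ) * 2 ^ r * bernoulli r * bernoulli (g + 1 - r) =
      -(g : ℚ) * bernoulli (g + 1) := by
  have h := my_conv g
  have hz : ((g:ℚ)+1) * ((2:ℚ)^g - 2) * bernoulli g = 0 := by
    rcases eq_or_lt_of_le hg with h1 | h1
    · rw [← h1]; norm_num
    · have hb : bernoulli g = 0 := by
        rw [bernoulli_eq_bernoulli'_of_ne_one (by omega)]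
        exact bernoulli'_eq_zero_of_odd hodd h1
      simp [hb]
  linear_combination h/2 + hz/2
end

section
/- For every even integer g ≥ 2 and every real number c, Σ_{m=0}^{g+1} C(g+1, m)·B_m·B_{g+1−m}·c^m = −((g+1)/2)·B_g·(c + c^g). -/
/-- For every even `g ≥ 2` and every real `c`,
`∑_{m=0}^{g+1} C(g+1,m) B_m B_{g+1-m} c^m = -((g+1)/2) B_g (c + c^g)`. -/
theorem stmt15 (g : ℕ) (hg : 2 ≤ g) (heven : Even g) (c : ℝ) :
    ∑ m ∈ Finset.range (g + 2),
        ((g + 1).choose m : ℝ) * (bernoulli m : ℝ) * (bernoulli (g + 1 - m) : ℝ) * c ^ m =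
      -(((g : ℝ) + 1) / 2) * (bernoulli g : ℝ) * (c + c ^ g) := by
  have hsub : ({1, g} : Finset ℕ) ⊆ Finset.range (g + 2) := by
    intro x hx
    simp only [Finset.mem_insert, Finset.mem_singleton] at hx
    rcases hx with h | h <;> simp [h]
  rw [← Finset.sum_subset hsub ?_]
  · rw [Finset.sum_pair (by omega : (1:ℕ) ≠ g)]
    have h1 : g + 1 - 1 = g := by omega
    have h2 : g + 1 - g = 1 := by omega
    have hc1 : (g + 1).choose 1 = g + 1 := by simp
    have hcg : (g + 1).choose g = g + 1 := by
      rw [← Nat.choose_symm (Nat.le_succ g), h2, hc1]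
    rw [h1, h2, hc1, hcg, bernoulli_one]
    push_cast
    ring
  · intro m hm hm'
    simp only [Finset.mem_insert, Finset.mem_singleton, not_or] at hm'
    simp only [Finset.mem_range] at hm
    rcases Nat.even_or_odd m with he | ho
    · -- m even, m ≠ g, so g+1-m is odd; if g+1-m ≤ 1 then g+1-m=1 gives m=g (excluded)
      -- or g+1-m=0 gives m ≥ g+1, but m even ≤ g+1 with g+1 odd means m ≤ g, so m < g+1... m even, g+1 odd so m ≠ g+1; hence m ≤ g, g+1-m ≥ 1, and ≠1.
      have hm1 : m ≤ g := by
        rcases he with ⟨k, hk⟩; rcases heven with ⟨j, hj⟩; omega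
      have hodd : Odd (g + 1 - m) := by
        rcases he with ⟨k, hk⟩; rcases heven with ⟨j, hj⟩
        refine ⟨j - k, by omega⟩
      have h1 : 1 < g + 1 - m := by omega
      rw [bernoulli_eq_bernoulli'_of_ne_one (n := g + 1 - m) (by omega), bernoulli'_eq_zero_of_odd hodd h1]
      simp
    · have h1 : 1 < m := by
        rcases ho with ⟨k, hk⟩; omega
      rw [bernoulli_eq_bernoulli'_of_ne_one (by omega), bernoulli'_eq_zero_of_odd ho h1]
      simp
end
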